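/- arXiv:2603.02839 — 7 statements merged into one kernel-verified Lean document; each statement's English description precedes it below -/
import Mathlib

section
/- The function f₁(x) = e^x(2x³ − x² + 6x − 12) − 2x³ + x² + 6x + 12 is nonnegative for all real x. -/
/-!
Write `f₁(x) = eˣ P(x) + Q(x)` with cubics `P`, `Q`. Differentiating such a function again gives
one of the same form, and after four steps the polynomial part is gone: `f₁` and its first three
derivatives vanish at `0`, while `f₁⁽⁴⁾(x) = eˣ (2x³ + 23x² + 70x + 48) ≥ 0` for `x ≥ 0`. Integrating
four times gives `f₁ ≥ 0` on `[0, ∞)`. For `x < 0`, `e⁻ˣ f₁(x)` is again of this form as a function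
of `-x`, and the same argument applies to it.
-/

open Real Set

noncomputable def expCubic (a b c d p q r s x : ℝ) : ℝ :=
  exp x * (a * x ^ 3 + b * x ^ 2 + c * x + d) + (p * x ^ 3 + q * x ^ 2 + r * x + s)

theorem nonneg_of_hasDerivAt_of_nonneg {F F' : ℝ → ℝ} (hF : ∀ x, HasDerivAt F (F' x) x)
    (hF0 : F 0 = 0) (hF' : ∀ x, 0 ≤ x → 0 ≤ F' x) {x : ℝ} (hx : 0 ≤ x) : 0 ≤ F x := by
  have hmono : MonotoneOn F (Ici 0) :=
    monotoneOn_of_hasDerivWithinAt_nonneg (convex_Ici 0)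
      (fun y _ => (hF y).continuousAt.continuousWithinAt) (fun y _ => (hF y).hasDerivWithinAt)
      (fun y hy => hF' y (interior_subset hy))
  simpa [hF0] using hmono self_mem_Ici hx hx

theorem hasDerivAt_expCubic (a b c d p q r s x : ℝ) :
    HasDerivAt (expCubic a b c d p q r s)
      (expCubic a (b + 3 * a) (c + 2 * b) (d + c) 0 (3 * p) (2 * q) r x) x := by
  have hcubic (a b c d : ℝ) : HasDerivAt (fun x => a * x ^ 3 + b * x ^ 2 + c * x + d)
      (3 * a * x ^ 2 + 2 * b * x + c) x := by
    refine ((((hasDerivAt_pow 3 x).const_mul a).add ((hasDerivAt_pow 2 x).const_mul b)).add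
      ((hasDerivAt_id' x).const_mul c)).add_const d |>.congr_deriv ?_
    push_cast
    ring
  refine ((hasDerivAt_exp x).mul (hcubic a b c d)).add (hcubic p q r s) |>.congr_deriv ?_
  simp only [expCubic]
  ring

theorem expCubic_nonneg_of_deriv_nonneg {a b c d p q r s : ℝ} (h0 : d + s = 0)
    (h' : ∀ x, 0 ≤ x → 0 ≤ expCubic a (b + 3 * a) (c + 2 * b) (d + c) 0 (3 * p) (2 * q) r x)
    {x : ℝ} (hx : 0 ≤ x) : 0 ≤ expCubic a b c d p q r s x :=
  nonneg_of_hasDerivAt_of_nonneg (hasDerivAt_expCubic a b c d p q r s) (by simpa [expCubic]) h' hx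

theorem expCubic_nonneg_of_coeff_nonneg {a b c d x : ℝ} (ha : 0 ≤ a) (hb : 0 ≤ b) (hc : 0 ≤ c)
    (hd : 0 ≤ d) (hx : 0 ≤ x) : 0 ≤ expCubic a b c d 0 0 0 0 x := by
  simp only [expCubic, zero_mul, add_zero]
  positivity

/-- `h0`–`h3` say that `expCubic a b c d p q r s` and its first three derivatives vanish at `0`;
`ha`–`hd` are the coefficients of the cubic multiplying `exp x` in its fourth derivative. -/
theorem expCubic_nonneg_of_fourth_deriv {a b c d p q r s : ℝ} (h0 : d + s = 0)
    (h1 : d + c + r = 0) (h2 : d + 2 * c + 2 * b + 2 * q = 0)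
    (h3 : d + 3 * c + 6 * b + 6 * a + 6 * p = 0) (ha : 0 ≤ a) (hb : 0 ≤ b + 12 * a)
    (hc : 0 ≤ c + 8 * b + 36 * a) (hd : 0 ≤ d + 4 * c + 12 * b + 24 * a)
    {x : ℝ} (hx : 0 ≤ x) : 0 ≤ expCubic a b c d p q r s x := by
  refine expCubic_nonneg_of_deriv_nonneg h0 (fun x hx => ?_) hx
  refine expCubic_nonneg_of_deriv_nonneg (by linarith) (fun x hx => ?_) hx
  refine expCubic_nonneg_of_deriv_nonneg (by linarith) (fun x hx => ?_) hx
  refine expCubic_nonneg_of_deriv_nonneg (by linarith) (fun x hx => ?_) hx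
  convert expCubic_nonneg_of_coeff_nonneg ha hb hc hd hx using 1
  simp only [expCubic]
  ring

theorem expCubic_eq_exp_mul_expCubic_neg (a b c d p q r s x : ℝ) :
    expCubic a b c d p q r s x = exp x * expCubic (-p) q (-r) s (-a) b (-c) d (-x) := by
  simp only [expCubic]
  rw [mul_add (exp x) (exp (-x) * _), ← mul_assoc, ← exp_add, add_neg_cancel, exp_zero, one_mul]
  ring

theorem f1_nonneg :
    ∀ x : ℝ, 0 ≤ Real.exp x * (2*x^3 - x^2 + 6*x - 12) - 2*x^3 + x^2 + 6*x + 12 := by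
  intro x
  have hf : exp x * (2*x^3 - x^2 + 6*x - 12) - 2*x^3 + x^2 + 6*x + 12
      = expCubic 2 (-1) 6 (-12) (-2) 1 6 12 x := by
    simp only [expCubic]
    ring
  rw [hf]
  rcases le_or_gt 0 x with hx | hx
  · refine expCubic_nonneg_of_fourth_deriv ?_ ?_ ?_ ?_ ?_ ?_ ?_ ?_ hx <;> norm_num
  · rw [expCubic_eq_exp_mul_expCubic_neg]
    refine mul_nonneg (exp_pos x).le <|
      expCubic_nonneg_of_fourth_deriv ?_ ?_ ?_ ?_ ?_ ?_ ?_ ?_ (neg_nonneg.mpr hx.le) <;> norm_num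
end

section
/- The function f₂(x) = e^{2x}(5x² + 2x) − 12e^{x}(x² − x + 4) + 15x² + 34x + 48 is nonnegative for all real x. -/
open Real Finset

lemma exp_ub5 {x : ℝ} (h : |x| ≤ 1) :
    Real.exp x ≤ 1 + x + x^2/2 + x^3/6 + x^4/24 + |x|^5/100 := by
  have hb := Real.exp_bound h (n := 5) (by norm_num)
  have hsum : ∑ m ∈ Finset.range 5, x ^ m / (m.factorial : ℝ)
      = 1 + x + x^2/2 + x^3/6 + x^4/24 := by
    simp [Finset.sum_range_succ, Nat.factorial]
  rw [hsum] at hb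
  have h1 := (abs_sub_le_iff.1 hb).1
  have h2 : (((5:ℕ).succ : ℝ)) / (((5:ℕ).factorial :ℝ) * ((5:ℕ):ℝ)) = 1/100 := by
    norm_num [Nat.factorial]
  rw [h2] at h1
  linarith

set_option maxHeartbeats 2000000 in
theorem f2_nonneg :
    ∀ x : ℝ, 0 ≤ Real.exp (2*x) * (5*x^2 + 2*x) - 12 * Real.exp x * (x^2 - x + 4)
      + 15*x^2 + 34*x + 48 := by
  intro x
  have h2x : Real.exp (2*x) = Real.exp x ^ 2 := by
    rw [two_mul, Real.exp_add]; ring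
  rw [h2x]
  have hE : 0 < Real.exp x := Real.exp_pos x
  have hs0 : x + 1 ≤ Real.exp x := Real.add_one_le_exp x
  have he1 : (2.7182818283 : ℝ) < Real.exp 1 := Real.exp_one_gt_d9
  have he1' : Real.exp 1 < 2.7182818286 := Real.exp_one_lt_d9
  have hem1 : Real.exp (-1) ≤ 0.3679 := by
    have h1 : Real.exp (-1) * Real.exp 1 = 1 := by rw [← Real.exp_add]; norm_num
    have hp := Real.exp_pos (-1)
    nlinarith
  have hem2 : Real.exp (-2) ≤ 0.1354 := by
    have h1 : Real.exp (-2) * (Real.exp 1 * Real.exp 1) = 1 := by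
      rw [← Real.exp_add, ← Real.exp_add]; norm_num
    have hp := Real.exp_pos (-2)
    nlinarith
  rcases le_total x (-2) with h6 | h5'
  · -- Region 6 : x ≤ -2
    have hU : Real.exp x ≤ 0.1354 :=
      le_trans (Real.exp_le_exp.2 (by linarith)) hem2
    nlinarith [sq_nonneg (x+2), sq_nonneg x, mul_nonneg hE.le (sub_nonneg.2 hU),
      mul_nonneg (sub_nonneg.2 hU) (sq_nonneg x), mul_pos hE hE,
      mul_nonneg (mul_nonneg (sub_nonneg.2 hU) hE.le) (sq_nonneg x),
      mul_nonneg (sub_nonneg.2 hU) hE.le]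
  · rcases le_total x (-1) with h5 | h4'
    · -- Region 5 : -2 ≤ x ≤ -1, chord bound via convexity
      have hc := convexOn_exp.2 (Set.mem_univ (-2:ℝ)) (Set.mem_univ (-1:ℝ))
        (show (0:ℝ) ≤ -1-x by linarith) (show (0:ℝ) ≤ x+2 by linarith)
        (show (-1-x) + (x+2) = 1 by ring)
      simp only [smul_eq_mul] at hc
      have harg : (-1-x) * (-2) + (x+2) * (-1) = x := by ring
      rw [harg] at hc
      have hU : Real.exp x ≤ 0.1354 * (-1-x) + 0.3679 * (x+2) := by
        nlinarith [Real.exp_pos (-1), Real.exp_pos (-2)]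
      have key : 0 ≤ (0.1354 * (-1-x) + 0.3679 * (x+2) - Real.exp x) *
          (12*(x^2-x+4) - (5*x^2+2*x)*(Real.exp x + (0.1354 * (-1-x) + 0.3679 * (x+2)))) := by
        apply mul_nonneg (by linarith)
        nlinarith [hE.le, hU, sq_nonneg (x+1), sq_nonneg (x+2)]
      nlinarith [key, sq_nonneg (x+1), sq_nonneg (x+2),
        mul_nonneg (by linarith : (0:ℝ) ≤ x+2) (by linarith : (0:ℝ) ≤ -1-x)]
    · rcases le_total x 0 with h4 | h3'
      · -- Region 4 : -1 ≤ x ≤ 0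
        have hx : |x| ≤ 1 := abs_le.2 ⟨by linarith, by linarith⟩
        have hub := exp_ub5 hx
        rw [abs_of_nonpos h4] at hub
        have hx2 : x^2 ≤ 1 := by nlinarith
        have hx3 : x^3 ≤ 0 := by nlinarith [mul_nonneg (neg_nonneg.2 h4) (sq_nonneg x)]
        have hx4 : x^4 ≤ 1 := by nlinarith [sq_nonneg x, sq_nonneg (1 - x^2)]
        have hx4' : (0:ℝ) ≤ x^4 := by positivity
        have hx5 : -1 ≤ x^5 := by nlinarith [mul_nonneg (by linarith : (0:ℝ) ≤ x+1) hx4']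
        have hx5' : x^5 ≤ 0 := by nlinarith [mul_nonneg (neg_nonneg.2 h4) hx4']
        have hx6 : x^6 ≤ 1 := by nlinarith [mul_nonneg hx4' (by nlinarith : (0:ℝ) ≤ 1 - x^2), hx2]
        have hx7 : x^7 ≤ 0 := by nlinarith [mul_nonneg (mul_nonneg (neg_nonneg.2 h4) hx4') (sq_nonneg x)]
        have hx8 : (0:ℝ) ≤ x^8 := by positivity
        have hsu : Real.exp x - 1 - x ≤ x^2/2 + x^3/6 + x^4/24 - x^5/100 := by nlinarith [hub]
        have hu1 : x^2/2 + x^3/6 + x^4/24 - x^5/100 ≤ 1 := by linarith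
        have ha3 : 5*x^2 + 2*x ≤ 3 := by nlinarith
        have h1 : 0 ≤ (3 - (5*x^2+2*x)) * ((Real.exp x - 1 - x) + (x^2/2 + x^3/6 + x^4/24 - x^5/100)) :=
          mul_nonneg (by linarith) (by linarith)
        have hP : 46 ≤ -2*(5*x^3+x^2+8*x-24) := by nlinarith
        have hfac : 0 ≤ -((5*x^2+2*x)*((Real.exp x - 1 - x) + (x^2/2 + x^3/6 + x^4/24 - x^5/100)))
            - 2*(5*x^3+x^2+8*x-24) := by nlinarith [h1, hP, hsu, hs0, hu1]
        have key : 0 ≤ ((x^2/2 + x^3/6 + x^4/24 - x^5/100) - (Real.exp x - 1 - x)) *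
            (-((5*x^2+2*x)*((Real.exp x - 1 - x) + (x^2/2 + x^3/6 + x^4/24 - x^5/100)))
              - 2*(5*x^3+x^2+8*x-24)) :=
          mul_nonneg (by linarith) hfac
        have hcub : 0 ≤ (20:ℝ)/3 - 13/800 - 139/14400 + (349/50)*x + (238/75)*x^2 + (308/225)*x^3 := by
          nlinarith [mul_nonneg (by linarith : (0:ℝ) ≤ x+1) (neg_nonneg.2 h4),
            mul_nonneg (mul_nonneg (by linarith : (0:ℝ) ≤ x+1) (neg_nonneg.2 h4)) (neg_nonneg.2 h4),
            sq_nonneg (x+1), sq_nonneg x]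
        have hW : 0 ≤ (20:ℝ)/3 + (349/50)*x + (238/75)*x^2 + (308/225)*x^3 + (51/200)*x^4
            + (13/800)*x^5 - (139/14400)*x^6 - (119/30000)*x^7 + (1/2000)*x^8 := by
          linarith [hcub, hx5, hx6, hx7, hx8, hx4']
        have hQ : 0 ≤ x^4 * ((20:ℝ)/3 + (349/50)*x + (238/75)*x^2 + (308/225)*x^3 + (51/200)*x^4
            + (13/800)*x^5 - (139/14400)*x^6 - (119/30000)*x^7 + (1/2000)*x^8) :=
          mul_nonneg hx4' hW
        linarith [key, hQ]
      · rcases le_total x 1 with h3 | h2'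
        · -- Region 3 : 0 ≤ x ≤ 1
          have hx : |x| ≤ 1 := abs_le.2 ⟨by linarith, by linarith⟩
          have hub := exp_ub5 hx
          rw [abs_of_nonneg h3'] at hub
          have hsu : Real.exp x - 1 - x ≤ x^2/2 + x^3/6 + x^4/24 + x^5/100 := by nlinarith [hub]
          have hP : 5*x^3 + x^2 + 8*x - 24 ≤ 0 := by nlinarith
          have hass : 0 ≤ (5*x^2+2*x) * (Real.exp x - 1 - x)^2 :=
            mul_nonneg (by nlinarith) (sq_nonneg _)
          have key : 0 ≤ ((x^2/2 + x^3/6 + x^4/24 + x^5/100) - (Real.exp x - 1 - x)) *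
              (-2*(5*x^3+x^2+8*x-24)) :=
            mul_nonneg (by linarith) (by linarith)
          have hQ : 0 ≤ x^4 * ((20:ℝ)/3 + (138/25)*x + (191/100)*x^2 + (131/300)*x^3 + (1/10)*x^4) := by
            have h0 : (0:ℝ) ≤ (20:ℝ)/3 + (138/25)*x + (191/100)*x^2 + (131/300)*x^3 + (1/10)*x^4 := by
              nlinarith [sq_nonneg x, sq_nonneg (x^2), mul_nonneg h3' (sq_nonneg x)]
            exact mul_nonneg (by positivity) h0
          linarith [key, hQ, hass]
        · rcases le_total x (3/2) with h2 | h1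
          · -- Region 2 : 1 ≤ x ≤ 3/2
            have hy : |x - 1| ≤ 1 := abs_le.2 ⟨by linarith, by linarith⟩
            have hub := exp_ub5 hy
            rw [abs_of_nonneg (by linarith : (0:ℝ) ≤ x - 1)] at hub
            have hme : Real.exp x = Real.exp 1 * Real.exp (x-1) := by
              rw [← Real.exp_add]; ring_nf
            have hU : Real.exp x ≤ 2.7182818286 * (1 + (x-1) + (x-1)^2/2 + (x-1)^3/6 + (x-1)^4/24 + (x-1)^5/100) := by
              rw [hme]
              have hp := (Real.exp_pos (x-1)).le
              have hq : (0:ℝ) ≤ 1 + (x-1) + (x-1)^2/2 + (x-1)^3/6 + (x-1)^4/24 + (x-1)^5/100 := by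
                nlinarith [sq_nonneg (x-1), sq_nonneg ((x-1)^2)]
              nlinarith
            rcases le_total (5*x^3 + x^2 + 8*x - 24) 0 with hP | hP
            · nlinarith [mul_nonneg (sub_nonneg.2 hU) (neg_nonneg.2 hP),
                sq_nonneg (Real.exp x - 1 - x), mul_nonneg (sub_nonneg.2 hs0) (sq_nonneg x),
                sq_nonneg x, sq_nonneg (x-1),
                mul_nonneg (mul_nonneg (by linarith : (0:ℝ) ≤ x) (by linarith : (0:ℝ) ≤ x)) (sq_nonneg (Real.exp x - 1 - x))]
            · nlinarith [mul_nonneg (sub_nonneg.2 hs0) hP, sq_nonneg x,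
                mul_nonneg (mul_nonneg (by nlinarith : (0:ℝ) ≤ 5*x^2+2*x) (sub_nonneg.2 hs0)) (sub_nonneg.2 hs0)]
          · -- Region 1 : x ≥ 3/2
            have hP : 0 ≤ 5*x^3 + x^2 + 8*x - 24 := by nlinarith
            nlinarith [mul_nonneg (sub_nonneg.2 hs0) hP, sq_nonneg x,
              mul_nonneg (mul_nonneg (by nlinarith : (0:ℝ) ≤ 5*x^2+2*x) (sub_nonneg.2 hs0)) (sub_nonneg.2 hs0)]
end

section
/- The function f₃(x) = e^{3x}(x+2) + e^{2x}(−4x−10) + e^{x}(15x+2) + 6 is nonnegative for all real x. -/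
open Real Set

/-!
With `u = eˣ`, `f₃(x) = u (u² - 4u + 15) · h(x)` where
`h(x) = x + (2u³ - 10u² + 2u + 6) / (u (u² - 4u + 15))`. The first factor is positive, `h(0) = 0`,
and `h'(x) = (u - 1)³ (u² - 3u + 90) / (u (u² - 4u + 15)²)` has the sign of `x`, so `h` attains
its minimum `0` at `x = 0`.
-/

lemma isMinOn_univ_of_hasDerivAt {f f' : ℝ → ℝ} {b : ℝ} (hf : ∀ x, HasDerivAt f (f' x) x)
    (h₀ : ∀ x < b, f' x ≤ 0) (h₁ : ∀ x, b < x → 0 ≤ f' x) : IsMinOn f univ b :=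
  isMinOn_univ_of_deriv (hf b).continuousAt
    (fun x _ => (hf x).differentiableAt.differentiableWithinAt)
    (fun x _ => (hf x).differentiableAt.differentiableWithinAt)
    (fun x hx => (hf x).deriv ▸ h₀ x hx) (fun x hx => (hf x).deriv ▸ h₁ x hx)

lemma sq_sub_four_mul_add_fifteen_pos (u : ℝ) : 0 < u ^ 2 - 4 * u + 15 := by
  nlinarith [sq_nonneg (u - 2)]

noncomputable def f3Ratio (x : ℝ) : ℝ :=
  x + (2 * exp x ^ 3 - 10 * exp x ^ 2 + 2 * exp x + 6) / (exp x * (exp x ^ 2 - 4 * exp x + 15))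

lemma f3Ratio_zero : f3Ratio 0 = 0 := by norm_num [f3Ratio]

lemma hasDerivAt_f3Ratio (x : ℝ) :
    HasDerivAt f3Ratio
      ((exp x - 1) ^ 3 * ((exp x ^ 2 - 3 * exp x + 90) /
        (exp x * (exp x ^ 2 - 4 * exp x + 15) ^ 2))) x := by
  have hu := hasDerivAt_exp x
  have hQ := sq_sub_four_mul_add_fifteen_pos (exp x)
  have hnum : HasDerivAt (fun x => 2 * exp x ^ 3 - 10 * exp x ^ 2 + 2 * exp x + 6)
      ((6 * exp x ^ 2 - 20 * exp x + 2) * exp x) x := by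
    refine ((((hu.fun_pow 3).const_mul 2).sub ((hu.fun_pow 2).const_mul 10)).add
      (hu.const_mul 2) |>.add_const 6).congr_deriv ?_
    push_cast; ring
  have hden : HasDerivAt (fun x => exp x * (exp x ^ 2 - 4 * exp x + 15))
      ((3 * exp x ^ 2 - 8 * exp x + 15) * exp x) x := by
    refine (hu.mul (((hu.fun_pow 2).sub (hu.const_mul 4)).add_const 15)).congr_deriv ?_
    simp only [Pi.sub_apply, Nat.cast_ofNat]; ring
  refine ((hasDerivAt_id' x).add (hnum.div hden (by positivity))).congr_deriv ?_
  rw [one_add_div (by positivity), mul_div_assoc', div_eq_div_iff (by positivity) (by positivity)]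
  ring

lemma f3Ratio_nonneg (x : ℝ) : 0 ≤ f3Ratio x := by
  have hweight (y : ℝ) :
      0 ≤ (exp y ^ 2 - 3 * exp y + 90) / (exp y * (exp y ^ 2 - 4 * exp y + 15) ^ 2) :=
    div_nonneg (by nlinarith [sq_nonneg (exp y - 2)]) (by positivity)
  have hmin : IsMinOn f3Ratio univ 0 := by
    refine isMinOn_univ_of_hasDerivAt hasDerivAt_f3Ratio (fun y hy => ?_) (fun y hy => ?_)
    · have : (exp y - 1) ^ 3 ≤ 0 := Odd.pow_nonpos_iff (by decide) |>.mpr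
        (by linarith [exp_lt_one_iff.mpr hy])
      exact mul_nonpos_of_nonpos_of_nonneg this (hweight y)
    · exact mul_nonneg (pow_nonneg (by linarith [one_lt_exp_iff.mpr hy]) 3) (hweight y)
  exact f3Ratio_zero ▸ hmin (mem_univ x)

lemma f3_eq_mul_f3Ratio (x : ℝ) :
    exp (3 * x) * (x + 2) + exp (2 * x) * (-4 * x - 10) + exp x * (15 * x + 2) + 6
      = exp x * (exp x ^ 2 - 4 * exp x + 15) * f3Ratio x := by
  have hD := mul_pos (exp_pos x) (sq_sub_four_mul_add_fifteen_pos (exp x))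
  have h2 : exp (2 * x) = exp x ^ 2 := by rw [← exp_nat_mul]; norm_num
  have h3 : exp (3 * x) = exp x ^ 3 := by rw [← exp_nat_mul]; norm_num
  rw [f3Ratio, h2, h3]
  linear_combination -mul_div_cancel₀ (2 * exp x ^ 3 - 10 * exp x ^ 2 + 2 * exp x + 6) hD.ne'

theorem f3_nonneg :
    ∀ x : ℝ, 0 ≤ Real.exp (3*x) * (x + 2) + Real.exp (2*x) * (-4*x - 10)
      + Real.exp x * (15*x + 2) + 6 := by
  intro x
  rw [f3_eq_mul_f3Ratio]
  exact mul_nonneg (mul_pos (exp_pos x) (sq_sub_four_mul_add_fifteen_pos (exp x))).le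
    (f3Ratio_nonneg x)
end

section
/- For every real x, the expression e^{6x}(2x+2) + e^{4x}(−8x−10) + e^{2x}(30x+2) + 6 is nonnegative. -/
open Real

lemma cubic_base {w : ℝ} (h0 : 0 ≤ w) (h1 : w ≤ 1) :
    1 - w + w^2/2 - w^3/6 ≤ Real.exp (-w) := by
  have hb := Real.exp_bound (x := -w) (by rw [abs_neg, abs_of_nonneg h0]; exact h1) (n := 5) (by norm_num)
  rw [abs_le] at hb
  have hs : ∑ m ∈ Finset.range 5, (-w) ^ m / m.factorial
      = 1 - w + w^2/2 - w^3/6 + w^4/24 := by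
    norm_num [Finset.sum_range_succ, Nat.factorial]
    ring
  rw [hs] at hb
  have habs : |(-w)| = w := by rw [abs_neg, abs_of_nonneg h0]
  rw [habs] at hb
  have hb1 := hb.1
  norm_num [Nat.factorial] at hb1
  have h5 : w^5 ≤ w^4 := by
    calc w^5 = w^4 * w := by ring
    _ ≤ w^4 * 1 := by nlinarith [pow_nonneg h0 4]
    _ = w^4 := by ring
  nlinarith [hb1, pow_nonneg h0 4, pow_nonneg h0 5]

lemma cubic_neg {z : ℝ} (hz0 : 0 ≤ z) :
    1 - z + z^2/2 - z^3/6 ≤ Real.exp (-z) := by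
  rcases le_or_gt z 2 with h2 | h2
  · rcases le_or_gt z 1 with h1 | h1
    · exact cubic_base hz0 h1
    · have hw := cubic_base (by linarith : (0:ℝ) ≤ z/2) (by linarith)
      have hpos : (0:ℝ) ≤ 1 - z/2 + (z/2)^2/2 - (z/2)^3/6 := by nlinarith
      have hsq : Real.exp (-z) = Real.exp (-(z/2)) ^ 2 := by
        rw [← Real.exp_nat_mul]; norm_num; ring_nf
      rw [hsq]
      nlinarith [hw, hpos, pow_nonneg hz0 4, pow_nonneg hz0 5, pow_nonneg hz0 6]
  · have hq : (0:ℝ) ≤ z^2 - z + 4 := by nlinarith [sq_nonneg (z-1)]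
    have hcube : 0 ≤ z^3 - 3*z^2 + 6*z - 8 := by
      nlinarith [mul_nonneg (by linarith : (0:ℝ) ≤ z - 2) hq]
    nlinarith [Real.exp_pos (-z), hcube]

lemma cubic_le_exp (y : ℝ) : 1 + y + y^2/2 + y^3/6 ≤ Real.exp y := by
  rcases le_or_gt 0 y with hy | hy
  · have h := Real.sum_le_exp_of_nonneg hy 4
    have hs : ∑ m ∈ Finset.range 4, y ^ m / m.factorial
        = 1 + y + y^2/2 + y^3/6 := by
      norm_num [Finset.sum_range_succ, Nat.factorial]
    linarith [hs ▸ h]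
  · have h := cubic_neg (z := -y) (by linarith)
    rw [neg_neg] at h
    nlinarith [h]

set_option maxHeartbeats 1000000 in
theorem C3_nonneg :
    ∀ x : ℝ, 0 ≤ Real.exp (6*x) * (2*x + 2) + Real.exp (4*x) * (-8*x - 10)
      + Real.exp (2*x) * (30*x + 2) + 6 := by
  intro x
  set t := Real.exp (2*x) with ht
  have h1 : 0 < t := Real.exp_pos _
  have h4 : Real.exp (4*x) = t^2 := by rw [ht, ← Real.exp_nat_mul]; norm_num; ring_nf
  have h6 : Real.exp (6*x) = t^3 := by rw [ht, ← Real.exp_nat_mul]; norm_num; ring_nf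
  have hlo : 1 + 2*x + 2*x^2 + (4/3)*x^3 ≤ t := by
    have := cubic_le_exp (2*x); rw [← ht] at this; nlinarith [this]
  have hup : t * (1 - 2*x + 2*x^2 - (4/3)*x^3) ≤ 1 := by
    have h := cubic_le_exp (-(2*x))
    have hinv : Real.exp (-(2*x)) = 1 / t := by
      rw [Real.exp_neg, ht, inv_eq_one_div]
    rw [hinv] at h
    have h2 := (le_div_iff₀ h1).mp h
    nlinarith [h2]
  rw [h4, h6]
  have ha : 0 ≤ t - (1 + 2*x + 2*x^2 + (4/3)*x^3) := by linarith
  have hb : 0 ≤ 1 - t * (1 - 2*x + 2*x^2 - (4/3)*x^3) := by linarith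
  rcases le_or_gt 0 x with hx | hxneg
  ·
    linarith [mul_nonneg (mul_nonneg (mul_nonneg (pow_nonneg ha 0) (pow_nonneg hb 0)) (pow_nonneg h1.le 0)) (pow_nonneg hx 6),
      mul_nonneg (mul_nonneg (mul_nonneg (pow_nonneg ha 0) (pow_nonneg hb 0)) (pow_nonneg h1.le 0)) (pow_nonneg hx 7),
      mul_nonneg (mul_nonneg (mul_nonneg (pow_nonneg ha 0) (pow_nonneg hb 0)) (pow_nonneg h1.le 0)) (pow_nonneg hx 9),
      mul_nonneg (mul_nonneg (mul_nonneg (pow_nonneg ha 0) (pow_nonneg hb 0)) (pow_nonneg h1.le 1)) (pow_nonneg hx 4),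
      mul_nonneg (mul_nonneg (mul_nonneg (pow_nonneg ha 0) (pow_nonneg hb 0)) (pow_nonneg h1.le 1)) (pow_nonneg hx 5),
      mul_nonneg (mul_nonneg (mul_nonneg (pow_nonneg ha 0) (pow_nonneg hb 1)) (pow_nonneg h1.le 0)) (pow_nonneg hx 0),
      mul_nonneg (mul_nonneg (mul_nonneg (pow_nonneg ha 0) (pow_nonneg hb 1)) (pow_nonneg h1.le 0)) (pow_nonneg hx 1),
      mul_nonneg (mul_nonneg (mul_nonneg (pow_nonneg ha 0) (pow_nonneg hb 1)) (pow_nonneg h1.le 0)) (pow_nonneg hx 2),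
      mul_nonneg (mul_nonneg (mul_nonneg (pow_nonneg ha 0) (pow_nonneg hb 1)) (pow_nonneg h1.le 1)) (pow_nonneg hx 0),
      mul_nonneg (mul_nonneg (mul_nonneg (pow_nonneg ha 0) (pow_nonneg hb 1)) (pow_nonneg h1.le 1)) (pow_nonneg hx 1),
      mul_nonneg (mul_nonneg (mul_nonneg (pow_nonneg ha 1) (pow_nonneg hb 0)) (pow_nonneg h1.le 0)) (pow_nonneg hx 4),
      mul_nonneg (mul_nonneg (mul_nonneg (pow_nonneg ha 1) (pow_nonneg hb 0)) (pow_nonneg h1.le 1)) (pow_nonneg hx 2),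
      mul_nonneg (mul_nonneg (mul_nonneg (pow_nonneg ha 1) (pow_nonneg hb 0)) (pow_nonneg h1.le 1)) (pow_nonneg hx 3),
      mul_nonneg (mul_nonneg (mul_nonneg (pow_nonneg ha 1) (pow_nonneg hb 1)) (pow_nonneg h1.le 0)) (pow_nonneg hx 1),
      mul_nonneg (mul_nonneg (mul_nonneg (pow_nonneg ha 2) (pow_nonneg hb 0)) (pow_nonneg h1.le 0)) (pow_nonneg hx 0),
      mul_nonneg (mul_nonneg (mul_nonneg (pow_nonneg ha 2) (pow_nonneg hb 0)) (pow_nonneg h1.le 0)) (pow_nonneg hx 1),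
      mul_nonneg (mul_nonneg (mul_nonneg (pow_nonneg ha 2) (pow_nonneg hb 0)) (pow_nonneg h1.le 0)) (pow_nonneg hx 2),
      mul_nonneg (mul_nonneg (mul_nonneg (pow_nonneg ha 2) (pow_nonneg hb 0)) (pow_nonneg h1.le 0)) (pow_nonneg hx 4),
      mul_nonneg (mul_nonneg (mul_nonneg (pow_nonneg ha 2) (pow_nonneg hb 0)) (pow_nonneg h1.le 1)) (pow_nonneg hx 1),
      mul_nonneg (mul_nonneg (mul_nonneg (pow_nonneg ha 3) (pow_nonneg hb 0)) (pow_nonneg h1.le 0)) (pow_nonneg hx 0),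
      mul_nonneg (mul_nonneg (mul_nonneg (pow_nonneg ha 3) (pow_nonneg hb 0)) (pow_nonneg h1.le 0)) (pow_nonneg hx 1)]
  · have hx : (0:ℝ) ≤ -x := by linarith
    linarith [mul_nonneg (mul_nonneg (mul_nonneg (pow_nonneg ha 0) (pow_nonneg hb 0)) (pow_nonneg h1.le 3)) (pow_nonneg hx 5),
      mul_nonneg (mul_nonneg (mul_nonneg (pow_nonneg ha 0) (pow_nonneg hb 0)) (pow_nonneg h1.le 3)) (pow_nonneg hx 6),
      mul_nonneg (mul_nonneg (mul_nonneg (pow_nonneg ha 0) (pow_nonneg hb 0)) (pow_nonneg h1.le 3)) (pow_nonneg hx 7),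
      mul_nonneg (mul_nonneg (mul_nonneg (pow_nonneg ha 0) (pow_nonneg hb 0)) (pow_nonneg h1.le 3)) (pow_nonneg hx 8),
      mul_nonneg (mul_nonneg (mul_nonneg (pow_nonneg ha 0) (pow_nonneg hb 1)) (pow_nonneg h1.le 1)) (pow_nonneg hx 0),
      mul_nonneg (mul_nonneg (mul_nonneg (pow_nonneg ha 0) (pow_nonneg hb 1)) (pow_nonneg h1.le 1)) (pow_nonneg hx 2),
      mul_nonneg (mul_nonneg (mul_nonneg (pow_nonneg ha 0) (pow_nonneg hb 1)) (pow_nonneg h1.le 1)) (pow_nonneg hx 3),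
      mul_nonneg (mul_nonneg (mul_nonneg (pow_nonneg ha 0) (pow_nonneg hb 1)) (pow_nonneg h1.le 2)) (pow_nonneg hx 0),
      mul_nonneg (mul_nonneg (mul_nonneg (pow_nonneg ha 0) (pow_nonneg hb 1)) (pow_nonneg h1.le 2)) (pow_nonneg hx 5),
      mul_nonneg (mul_nonneg (mul_nonneg (pow_nonneg ha 0) (pow_nonneg hb 2)) (pow_nonneg h1.le 1)) (pow_nonneg hx 0),
      mul_nonneg (mul_nonneg (mul_nonneg (pow_nonneg ha 0) (pow_nonneg hb 2)) (pow_nonneg h1.le 1)) (pow_nonneg hx 2),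
      mul_nonneg (mul_nonneg (mul_nonneg (pow_nonneg ha 0) (pow_nonneg hb 2)) (pow_nonneg h1.le 1)) (pow_nonneg hx 3),
      mul_nonneg (mul_nonneg (mul_nonneg (pow_nonneg ha 0) (pow_nonneg hb 3)) (pow_nonneg h1.le 0)) (pow_nonneg hx 0),
      mul_nonneg (mul_nonneg (mul_nonneg (pow_nonneg ha 1) (pow_nonneg hb 0)) (pow_nonneg h1.le 1)) (pow_nonneg hx 0),
      mul_nonneg (mul_nonneg (mul_nonneg (pow_nonneg ha 1) (pow_nonneg hb 0)) (pow_nonneg h1.le 2)) (pow_nonneg hx 0),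
      mul_nonneg (mul_nonneg (mul_nonneg (pow_nonneg ha 1) (pow_nonneg hb 0)) (pow_nonneg h1.le 2)) (pow_nonneg hx 1),
      mul_nonneg (mul_nonneg (mul_nonneg (pow_nonneg ha 1) (pow_nonneg hb 0)) (pow_nonneg h1.le 2)) (pow_nonneg hx 2),
      mul_nonneg (mul_nonneg (mul_nonneg (pow_nonneg ha 1) (pow_nonneg hb 0)) (pow_nonneg h1.le 2)) (pow_nonneg hx 3)]
end

section
/- For every real x, the expression e^{6x}(5x² + x) + e^{4x}(−12x² + 6x − 12) + e^{2x}(15x² + 17x + 12) is nonnegative. -/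
/-!
Put `u = e^{2x}`, so that `C₂(x) = u · q(x, u)` with `q = C2Quad` quadratic in `u`. Since
`C₂(x) = (80/3) x⁴ + O(x⁵)` and `∂q/∂u = -12` at `(0, 1)`, the polynomial inequality
`q(x, u) ≥ 0` survives replacing `u` by an upper bound for `e^{2x}` that exceeds it by
less than `(20/9) x⁴`. Such a bound comes from the cubic Taylor bound
`1 - 2x + 2x² - (4/3)x³ ≤ e^{-2x}`, valid for every real `x` (odd Taylor polynomials of `exp`
are global lower bounds) and off by only `(2/3) x⁴`; together with `1 + 2x ≤ e^{2x}` it leaves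
polynomial inequalities in `x` and `u`.
-/

open Real

lemma exp_neg_mul_cubic_taylor_le_one_of_nonpos {s : ℝ} (hs : s ≤ 0) :
    exp (-s) * (1 + s + s ^ 2 / 2 + s ^ 3 / 6) ≤ 1 := by
  let g : ℝ → ℝ := fun s ↦ exp (-s) * (1 + s + s ^ 2 / 2 + s ^ 3 / 6)
  have hg : ∀ s, HasDerivAt g (-(exp (-s) * s ^ 3 / 6)) s := fun s ↦ by
    have hp : HasDerivAt (fun s : ℝ ↦ 1 + s + s ^ 2 / 2 + s ^ 3 / 6) (1 + s + s ^ 2 / 2) s :=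
      ((((hasDerivAt_id' s).const_add 1).add ((hasDerivAt_pow 2 s).div_const 2)).add
        ((hasDerivAt_pow 3 s).div_const 6)).congr_deriv (by norm_num; ring)
    exact ((hasDerivAt_neg' s).exp.mul hp).congr_deriv (by ring)
  have hmono : MonotoneOn g (Set.Iic 0) :=
    monotoneOn_of_hasDerivWithinAt_nonneg (convex_Iic 0)
      (fun s _ ↦ (hg s).continuousAt.continuousWithinAt)
      (fun s _ ↦ (hg s).hasDerivWithinAt)
      (fun s hs ↦ by
        rw [interior_Iic] at hs
        have hcube : s ^ 3 ≤ 0 := Odd.pow_nonpos (by decide) hs.le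
        nlinarith [exp_pos (-s)])
  simpa [g] using hmono hs Set.self_mem_Iic hs

lemma cubic_taylor_le_exp (s : ℝ) : 1 + s + s ^ 2 / 2 + s ^ 3 / 6 ≤ exp s := by
  rcases le_total 0 s with hs | hs
  · have := sum_le_exp_of_nonneg hs 4
    norm_num [Finset.sum_range_succ, Nat.factorial] at this
    linarith
  · have := exp_neg_mul_cubic_taylor_le_one_of_nonpos hs
    rwa [exp_neg, inv_mul_le_iff₀ (exp_pos s), mul_one] at this

def C2Quad (x u : ℝ) : ℝ :=
  u ^ 2 * (5 * x ^ 2 + x) + u * (-12 * x ^ 2 + 6 * x - 12) + (15 * x ^ 2 + 17 * x + 12)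

lemma C2Quad_nonneg_of_nonpos {x u : ℝ} (hx : x ≤ 0) (hu : 0 < u)
    (hup : u * (1 - 2 * x + 2 * x ^ 2 - 4 * x ^ 3 / 3) ≤ 1) : 0 ≤ C2Quad x u := by
  unfold C2Quad
  nlinarith [sq_nonneg (u - 1 - 2 * x), sq_nonneg (u * x - x)]

lemma C2Quad_nonneg_of_nonneg {x u v : ℝ} (hx : 0 ≤ x) (huv : u * v = 1)
    (hlow : 1 + 2 * x ≤ u) (hv : 1 - 2 * x + 2 * x ^ 2 - 4 * x ^ 3 / 3 ≤ v) :
    0 ≤ C2Quad x u := by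
  have hvlow : v * (1 + 2 * x) ≤ 1 := by nlinarith
  have hrecip : 0 ≤ (5 * x ^ 2 + x) + v * (-12 * x ^ 2 + 6 * x - 12)
      + v ^ 2 * (15 * x ^ 2 + 17 * x + 12) := by
    nlinarith [mul_nonneg (sub_nonneg.2 hvlow) hx, sq_nonneg (v * (1 + 2 * x) - 1),
      sq_nonneg (v - 1 + 2 * x)]
  have hscale : C2Quad x u = u ^ 2 * ((5 * x ^ 2 + x) + v * (-12 * x ^ 2 + 6 * x - 12)
      + v ^ 2 * (15 * x ^ 2 + 17 * x + 12)) := by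
    unfold C2Quad
    linear_combination
      (-(u * (-12 * x ^ 2 + 6 * x - 12)) - (u * v + 1) * (15 * x ^ 2 + 17 * x + 12)) * huv
  rw [hscale]
  exact mul_nonneg (sq_nonneg u) hrecip

lemma C2Quad_nonneg {x u v : ℝ} (hu : 0 < u) (huv : u * v = 1) (hlow : 1 + 2 * x ≤ u)
    (hv : 1 - 2 * x + 2 * x ^ 2 - 4 * x ^ 3 / 3 ≤ v) : 0 ≤ C2Quad x u := by
  rcases le_total x 0 with hx | hx
  · exact C2Quad_nonneg_of_nonpos hx hu (by nlinarith)
  · exact C2Quad_nonneg_of_nonneg hx huv hlow hv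

theorem C2_nonneg :
    ∀ x : ℝ, 0 ≤ Real.exp (6*x) * (5*x^2 + x) + Real.exp (4*x) * (-12*x^2 + 6*x - 12)
      + Real.exp (2*x) * (15*x^2 + 17*x + 12) := by
  intro x
  have huv : exp (2 * x) * exp (-(2 * x)) = 1 := by rw [← exp_add, add_neg_cancel, exp_zero]
  have hlow : 1 + 2 * x ≤ exp (2 * x) := by linarith [add_one_le_exp (2 * x)]
  have hv : 1 - 2 * x + 2 * x ^ 2 - 4 * x ^ 3 / 3 ≤ exp (-(2 * x)) := by
    linarith [cubic_taylor_le_exp (-(2 * x))]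
  have h6 : exp (6 * x) = exp (2 * x) ^ 3 := by rw [← exp_nat_mul]; ring_nf
  have h4 : exp (4 * x) = exp (2 * x) ^ 2 := by rw [← exp_nat_mul]; ring_nf
  have hfactor : exp (6 * x) * (5 * x ^ 2 + x) + exp (4 * x) * (-12 * x ^ 2 + 6 * x - 12)
      + exp (2 * x) * (15 * x ^ 2 + 17 * x + 12) = exp (2 * x) * C2Quad x (exp (2 * x)) := by
    rw [h6, h4, C2Quad]
    ring
  rw [hfactor]
  exact mul_nonneg (exp_pos _).le (C2Quad_nonneg (exp_pos _) huv hlow hv)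
end

section
/- For every real x, the expression e^{6x}(4x³ − x² + 3x − 3) + e^{4x}(−4x³ + x² + 3x + 3) is nonnegative. -/
/-!
Write the expression as `e^{6x} P + e^{4x} Q`. Since `P + Q = 6x`, and `Q > 0` for `x ≤ 0`,
one of `P`, `Q` is nonnegative.
If `P ≥ 0`, then `e^{2x} ≥ 1 + 2x` bounds the expression below by
`e^{4x} ((1 + 2x) P + Q) = 2x² (4x² - x + 3) e^{4x}`.
If `Q ≥ 0`, the cubic Taylor bound `e^{-2x} ≥ D := 1 - 2x + 2x² - 4x³/3` bounds it below by
`e^{6x} (P + D Q) = (2/3) x⁴ (8x² - 14x + 9) e^{6x}`.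
The expression vanishes to fourth order at `0`, so nothing cruder than a cubic bound can work.
That bound holds on all of `ℝ`: on `x ≤ 0` the remainders `exp x - ∑_{i<n} xⁱ/i!` alternate in
sign with `n`, since each is the derivative of the next and all vanish at `0`.
-/

open Real Finset Nat

namespace Real

theorem hasDerivAt_sum_range_succ_pow_div_factorial (n : ℕ) (x : ℝ) :
    HasDerivAt (fun y : ℝ => ∑ i ∈ range (n + 1), y ^ i / (i ! : ℝ))
      (∑ i ∈ range n, x ^ i / (i ! : ℝ)) x := by
  have h := HasDerivAt.fun_sum fun i (_ : i ∈ range (n + 1)) =>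
    (hasDerivAt_pow i x).div_const (i ! : ℝ)
  refine h.congr_deriv ?_
  rw [sum_range_succ']
  simp only [cast_add, cast_one, add_tsub_cancel_right, CharP.cast_eq_zero, zero_mul, zero_div,
    add_zero]
  refine sum_congr rfl fun i _ => ?_
  rw [factorial_succ, cast_mul]
  field_simp
  push_cast; ring

theorem neg_one_pow_mul_exp_sub_sum_range_nonneg (n : ℕ) {x : ℝ} (hx : x ≤ 0) :
    0 ≤ (-1) ^ n * (exp x - ∑ i ∈ range n, x ^ i / (i ! : ℝ)) := by
  induction n generalizing x with
  | zero => simpa using (exp_pos x).le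
  | succ n ih =>
    set R : ℝ → ℝ := fun y => (-1) ^ (n + 1) * (exp y - ∑ i ∈ range (n + 1), y ^ i / (i ! : ℝ))
    have hR : ∀ y, HasDerivAt R ((-1) ^ (n + 1) * (exp y - ∑ i ∈ range n, y ^ i / (i ! : ℝ))) y :=
      fun y => ((hasDerivAt_exp y).sub (hasDerivAt_sum_range_succ_pow_div_factorial n y)).const_mul _
    have hanti : AntitoneOn R (Set.Iic 0) := by
      refine antitoneOn_of_hasDerivWithinAt_nonpos (convex_Iic 0)
        (fun y _ => (hR y).continuousAt.continuousWithinAt)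
        (fun y _ => (hR y).hasDerivWithinAt) fun y hy => ?_
      rw [interior_Iic] at hy
      have := ih hy.le
      rw [pow_succ]; linarith
    have hR0 : R 0 = 0 := by simp [R, sum_range_succ']
    simpa [hR0] using hanti hx Set.self_mem_Iic hx

theorem sum_range_le_exp_of_even {n : ℕ} (hn : Even n) (x : ℝ) :
    ∑ i ∈ range n, x ^ i / (i ! : ℝ) ≤ exp x := by
  rcases le_total 0 x with hx | hx
  · exact sum_le_exp_of_nonneg hx n
  · simpa [hn.neg_one_pow] using neg_one_pow_mul_exp_sub_sum_range_nonneg n hx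

end Real

theorem C1_nonneg :
    ∀ x : ℝ, 0 ≤ Real.exp (6*x) * (4*x^3 - x^2 + 3*x - 3)
      + Real.exp (4*x) * (-4*x^3 + x^2 + 3*x + 3) := by
  intro x
  rcases le_or_gt 0 (4*x^3 - x^2 + 3*x - 3) with hP | hP
  · have hpoly : 0 ≤ (2*x + 1) * (4*x^3 - x^2 + 3*x - 3) + (-4*x^3 + x^2 + 3*x + 3) := by
      nlinarith [sq_nonneg x, sq_nonneg (x * (8*x - 1))]
    calc 0 ≤ exp (4*x) * ((2*x + 1) * (4*x^3 - x^2 + 3*x - 3) + (-4*x^3 + x^2 + 3*x + 3)) :=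
          mul_nonneg (exp_pos _).le hpoly
      _ ≤ exp (4*x) * (exp (2*x) * (4*x^3 - x^2 + 3*x - 3) + (-4*x^3 + x^2 + 3*x + 3)) := by
          gcongr; exact add_one_le_exp _
      _ = _ := by rw [mul_add, ← mul_assoc, ← exp_add]; ring_nf
  · have hQ : 0 ≤ -4*x^3 + x^2 + 3*x + 3 := by
      nlinarith [sq_nonneg x, sq_nonneg (x + 3/2)]
    have hexp : 1 - 2*x + 2*x^2 - 4/3*x^3 ≤ exp (-(2*x)) := by
      have h := sum_range_le_exp_of_even (n := 4) (by decide) (-(2*x))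
      norm_num [sum_range_succ, factorial] at h
      linarith
    have hpoly : 0 ≤ (4*x^3 - x^2 + 3*x - 3)
        + (1 - 2*x + 2*x^2 - 4/3*x^3) * (-4*x^3 + x^2 + 3*x + 3) := by
      nlinarith [sq_nonneg (x^2), sq_nonneg (x^2 * (8*x - 7))]
    calc 0 ≤ exp (6*x) * ((4*x^3 - x^2 + 3*x - 3)
            + (1 - 2*x + 2*x^2 - 4/3*x^3) * (-4*x^3 + x^2 + 3*x + 3)) :=
          mul_nonneg (exp_pos _).le hpoly
      _ ≤ exp (6*x) * ((4*x^3 - x^2 + 3*x - 3) + exp (-(2*x)) * (-4*x^3 + x^2 + 3*x + 3)) := by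
          gcongr
      _ = _ := by rw [mul_add, ← mul_assoc, ← exp_add]; ring_nf
end

section
/- Let f(r) = 1 + (p_z + c·ln r)² + L²·r^{−2} on r > 0, where c = (μ₀/(2π))·I₀ > 0 and L > 0. Then f has a unique critical point r̄ > 0, f is strictly decreasing on (0, r̄) and strictly increasing on (r̄, ∞), and f attains a global minimum at r̄. -/
/-!
For the potential `f(r) = 1 + (p + c log r)² + L²/r²` one has `f'(r) = (2/r) k(r)` with
`k(r) = c (p + c log r) - L²/r²`. Since `c > 0`, `k` is strictly increasing on `(0, ∞)` (both
`c² log r` and `-L²/r²` increase), and it changes sign: `k(a) ≤ 0` at the point `a` where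
`p + c log a = 0`, and `k(b) ≥ 0` at the point `b ≥ a` where `c (p + c log b) = L²/a²`.
Its unique zero `r̄` is therefore the unique critical point of `f`, with `f' < 0` before it and
`f' > 0` after it.
-/

open Real Set

theorem hasDerivAt_potential (c L p : ℝ) {r : ℝ} (hr : 0 < r) :
    HasDerivAt (fun x => 1 + (p + c * log x) ^ 2 + L ^ 2 / x ^ 2)
      (2 / r * (c * (p + c * log r) - L ^ 2 / r ^ 2)) r := by
  have hlog := ((hasDerivAt_log hr.ne').const_mul c).const_add p
  have hinv := (hasDerivAt_const r (L ^ 2)).div (hasDerivAt_pow 2 r) (by positivity)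
  exact ((hlog.pow 2).const_add 1 |>.add hinv).congr_deriv (by field_simp; ring)

variable {c : ℝ}

theorem strictMonoOn_potential_slope (hc : 0 < c) (L p : ℝ) :
    StrictMonoOn (fun r => c * (p + c * log r) - L ^ 2 / r ^ 2) (Ioi 0) := by
  intro a (ha : 0 < a) b _ hab
  have hlog : c * log a < c * log b := mul_lt_mul_of_pos_left (log_lt_log ha hab) hc
  have hinv : L ^ 2 / b ^ 2 ≤ L ^ 2 / a ^ 2 :=
    div_le_div_of_nonneg_left (sq_nonneg L) (by positivity) (pow_le_pow_left₀ ha.le hab.le 2)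
  dsimp only
  nlinarith

theorem exists_potential_slope_eq_zero (hc : 0 < c) (L p : ℝ) :
    ∃ r > 0, c * (p + c * log r) - L ^ 2 / r ^ 2 = 0 := by
  set a := exp (-p / c)
  set s := L ^ 2 / (c * a ^ 2)
  set b := exp ((s - p) / c)
  have ha : 0 < a := exp_pos _
  have hs : 0 ≤ s := by positivity
  have hab : a ≤ b := exp_le_exp.mpr <| div_le_div_of_nonneg_right (by linarith) hc.le
  have hcont : ContinuousOn (fun r => c * (p + c * log r) - L ^ 2 / r ^ 2) (Icc a b) :=
    fun x hx => by
      have : x ≠ 0 := (ha.trans_le hx.1).ne'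
      fun_prop (disch := simp [this])
  have hka : c * (p + c * log a) - L ^ 2 / a ^ 2 ≤ 0 := by
    have : c * (p + c * log a) = 0 := by
      rw [log_exp]
      field_simp
      ring
    rw [this, zero_sub, neg_nonpos]
    positivity
  have hkb : 0 ≤ c * (p + c * log b) - L ^ 2 / b ^ 2 := by
    have : c * (p + c * log b) = L ^ 2 / a ^ 2 := by
      rw [log_exp, mul_div_cancel₀ _ hc.ne', add_sub_cancel]
      simp only [s]
      field_simp
    rw [this, sub_nonneg]
    exact div_le_div_of_nonneg_left (sq_nonneg L) (by positivity) (pow_le_pow_left₀ ha.le hab 2)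
  obtain ⟨r, hr, hr0⟩ := intermediate_value_Icc hab hcont ⟨hka, hkb⟩
  exact ⟨r, ha.trans_le hr.1, hr0⟩

theorem strictAntiOn_Ioc_strictMonoOn_Ici_of_hasDerivAt {f f' : ℝ → ℝ} {a b : ℝ} (hab : a < b)
    (hf : ∀ x > a, HasDerivAt f (f' x) x) (hneg : ∀ x ∈ Ioo a b, f' x < 0)
    (hpos : ∀ x > b, 0 < f' x) :
    StrictAntiOn f (Ioc a b) ∧ StrictMonoOn f (Ici b) := by
  have hcont : ContinuousOn f (Ioi a) := fun x hx => (hf x hx).continuousAt.continuousWithinAt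
  constructor
  · refine strictAntiOn_of_deriv_neg (convex_Ioc a b) (hcont.mono Ioc_subset_Ioi_self) ?_
    intro x hx
    rw [interior_Ioc] at hx
    exact (hf x hx.1).deriv ▸ hneg x hx
  · refine strictMonoOn_of_deriv_pos (convex_Ici b) (hcont.mono (Ici_subset_Ioi.mpr hab)) ?_
    intro x hx
    rw [interior_Ici] at hx
    exact (hf x (hab.trans hx)).deriv ▸ hpos x hx

theorem f_unique_min_general (c L p_z : ℝ) (hc : 0 < c) (f : ℝ → ℝ)
    (hdef : ∀ r > 0, f r = 1 + (p_z + c * Real.log r)^2 + L^2 / r^2) :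
    ∃ rbar : ℝ, 0 < rbar ∧
      (∀ r > 0, deriv f r = 0 ↔ r = rbar) ∧
      StrictAntiOn f (Set.Ioc 0 rbar) ∧
      StrictMonoOn f (Set.Ici rbar) ∧
      (∀ r > 0, f rbar ≤ f r) := by
  set k := fun r => c * (p_z + c * log r) - L ^ 2 / r ^ 2
  have hk_mono : StrictMonoOn k (Ioi 0) := strictMonoOn_potential_slope hc L p_z
  obtain ⟨rbar, hrbar, hk_rbar⟩ : ∃ r > 0, k r = 0 := exists_potential_slope_eq_zero hc L p_z
  have hf : ∀ r > 0, HasDerivAt f (2 / r * k r) r := fun r hr =>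
    (hasDerivAt_potential c L p_z hr).congr_of_eventuallyEq
      (Filter.eventually_of_mem (Ioi_mem_nhds hr) hdef)
  have hk_neg : ∀ r ∈ Ioo 0 rbar, k r < 0 := fun r hr =>
    hk_rbar ▸ hk_mono hr.1 hrbar hr.2
  have hk_pos : ∀ r > rbar, 0 < k r := fun r hr =>
    hk_rbar ▸ hk_mono hrbar (hrbar.trans hr) hr
  obtain ⟨hanti, hmono⟩ := strictAntiOn_Ioc_strictMonoOn_Ici_of_hasDerivAt hrbar hf
    (fun r hr => mul_neg_of_pos_of_neg (div_pos two_pos hr.1) (hk_neg r hr))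
    (fun r hr => mul_pos (div_pos two_pos (hrbar.trans hr)) (hk_pos r hr))
  refine ⟨rbar, hrbar, fun r hr => ?_, hanti, hmono, fun r hr => ?_⟩
  · rw [(hf r hr).deriv, mul_eq_zero, or_iff_right (div_pos two_pos hr).ne', ← hk_rbar,
      hk_mono.injOn.eq_iff hr hrbar]
  · rcases le_total r rbar with h | h
    · exact hanti.antitoneOn ⟨hr, h⟩ ⟨hrbar, le_rfl⟩ h
    · exact hmono.monotoneOn self_mem_Ici h h

theorem f_unique_min (c L p_z : ℝ) (hc : 0 < c) (hL : 0 < L) (f : ℝ → ℝ)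
    (hdef : ∀ r > 0, f r = 1 + (p_z + c * Real.log r)^2 + L^2 / r^2) :
    ∃ rbar : ℝ, 0 < rbar ∧
      (∀ r > 0, deriv f r = 0 ↔ r = rbar) ∧
      StrictAntiOn f (Set.Ioc 0 rbar) ∧
      StrictMonoOn f (Set.Ici rbar) ∧
      (∀ r > 0, f rbar ≤ f r) :=
  f_unique_min_general c L p_z hc f hdef
end
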